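/- Let θ : 𝕋 × (0,∞) → ℂ be a sufficiently smooth solution of ∂_t θ + ξ(t) v(y) i k θ = ν ∂_y² θ, with v : 𝕋 → ℝ smooth. Then (d/dt) E3(t) = −ξ(t) k² E4(t) − 2ν Re⟨ik ∂_y v ∂_y θ, ∂_y² θ⟩ − ν Re⟨ik ∂_y² v θ, ∂_y² θ⟩, where E3(t) = Re⟨ik ∂_y v θ, ∂_y θ⟩ and E4(t) = ‖∂_y v θ‖²_{L²_y}. -/

import Mathlib

open MeasureTheory Real

/-- Squared `L²` norm on the torus `𝕋 = ℝ/2πℤ`, computed over one period. -/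
noncomputable def L2sq (f : ℝ → ℂ) : ℝ := ∫ y in (0:ℝ)..(2*π), ‖f y‖^2

/-- Real part of the `L²(𝕋)` inner product `⟨f,g⟩ = ∫ f ḡ`. -/
noncomputable def reInner (f g : ℝ → ℂ) : ℝ :=
  ∫ y in (0:ℝ)..(2*π), (f y * (starRingEnd ℂ) (g y)).re

/-- `v` has only finitely many critical points in a period, all simple (`v'' ≠ 0` there). -/
def SimpleCritPts (v : ℝ → ℝ) : Prop :=
  {y : ℝ | y ∈ Set.Ico (0:ℝ) (2*π) ∧ deriv v y = 0}.Finite ∧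
    ∀ y : ℝ, deriv v y = 0 → deriv (deriv v) y ≠ 0

/-- Energy `E0 = ‖θ‖²_{L²}`. -/
noncomputable def F0 (θ : ℝ → ℂ) : ℝ := L2sq θ
/-- Energy `E1 = ‖∂_y θ‖²_{L²}`. -/
noncomputable def F1 (θ : ℝ → ℂ) : ℝ := L2sq (fun y => deriv θ y)
/-- Energy `E2 = ‖∂_y² θ‖²_{L²}`. -/
noncomputable def F2 (θ : ℝ → ℂ) : ℝ := L2sq (fun y => deriv (deriv θ) y)
/-- Energy `E3 = Re⟨ik v' θ, ∂_y θ⟩`. -/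
noncomputable def F3 (k : ℤ) (v : ℝ → ℝ) (θ : ℝ → ℂ) : ℝ :=
  reInner (fun y => Complex.I * (k:ℂ) * Complex.ofReal (deriv v y) * θ y) (fun y => deriv θ y)
/-- Energy `E4 = ‖v' θ‖²_{L²}`. -/
noncomputable def F4 (v : ℝ → ℝ) (θ : ℝ → ℂ) : ℝ :=
  L2sq (fun y => Complex.ofReal (deriv v y) * θ y)

/-- The time weight `w_ν(t) = (1 + ν^s t)⁻¹`. -/
noncomputable def wght (ν s t : ℝ) : ℝ := (1 + ν ^ s * t)⁻¹

/-- `Θ̂` solves `∂_t Θ̂ + ξ(t) v(y) i k Θ̂ = ν(−k² + ∂_y²)Θ̂` on `[0,T]`. -/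
def SolvesAD (ν : ℝ) (k : ℤ) (ξ v : ℝ → ℝ) (Θ : ℝ → ℝ → ℂ) (T : ℝ) : Prop :=
  ∀ t ∈ Set.Icc (0:ℝ) T, ∀ y : ℝ,
    HasDerivAt (fun τ => Θ τ y)
      ((ν:ℂ) * (deriv (deriv (Θ t)) y - (k:ℂ)^2 * Θ t y)
        - (ξ t : ℂ) * (v y : ℂ) * Complex.I * (k:ℂ) * Θ t y) t

/-- `θ` solves the hypoelliptic equation `∂_t θ + ξ(t) v(y) i k θ = ν ∂_y² θ` on `[0,T]`. -/
def SolvesHypo (ν : ℝ) (k : ℤ) (ξ v : ℝ → ℝ) (θ : ℝ → ℝ → ℂ) (T : ℝ) : Prop :=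
  ∀ t ∈ Set.Icc (0:ℝ) T, ∀ y : ℝ,
    HasDerivAt (fun τ => θ τ y)
      ((ν:ℂ) * deriv (deriv (θ t)) y
        - (ξ t : ℂ) * (v y : ℂ) * Complex.I * (k:ℂ) * θ t y) t

/-- The transition time `t*_{ν,k} = ν^{−s}(|k|^{1/2} C β^{3/2} ν^{−1/2} − 1)`. -/
noncomputable def tStar (ν s C β : ℝ) (k : ℤ) : ℝ :=
  ν ^ (-s) * (|(k:ℝ)| ^ ((1:ℝ)/2) * C * β ^ ((3:ℝ)/2) / ν ^ ((1:ℝ)/2) - 1)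

/-- The admissibility condition `L(t) ≤ ξ(t) ≤ U(t)` on `[0,T]`:
`L(t) = C²β²` for `t ≤ t*`, `L(t) = (ν/(|k|β)) w_ν(t)⁻²` for `t ≥ t*`, `U(t) = w_ν(t)^{−ℓ}`. -/
def XiBounds (ν s C β ℓ : ℝ) (k : ℤ) (ξ : ℝ → ℝ) (T : ℝ) : Prop :=
  ∀ t ∈ Set.Icc (0:ℝ) T,
    (t ≤ tStar ν s C β k → C^2 * β^2 ≤ ξ t) ∧
    (tStar ν s C β k ≤ t → ν / (|(k:ℝ)| * β) / (wght ν s t)^2 ≤ ξ t) ∧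
    ξ t ≤ (wght ν s t) ^ (-ℓ)

/-- The augmented weighted hypocoercivity functional
`Φ(t) = ½[E0 + α₀ w³ E1 + 2β₀ w² E3 + γ₀ w k² E4]` with
`β₀ = β/|k|`, `α₀ = (β₀ν)^{1/2}`, `γ₀ = 16 β₀^{3/2}/ν^{1/2}`. -/
noncomputable def Phi (ν s β : ℝ) (k : ℤ) (v : ℝ → ℝ) (θ : ℝ → ℝ → ℂ) (t : ℝ) : ℝ :=
  let β₀ : ℝ := β / |(k:ℝ)|
  let α₀ : ℝ := (β₀ * ν) ^ ((1:ℝ)/2)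
  let γ₀ : ℝ := 16 * β₀ ^ ((3:ℝ)/2) / ν ^ ((1:ℝ)/2)
  (1/2) * (F0 (θ t) + α₀ * (wght ν s t)^3 * F1 (θ t)
    + 2 * β₀ * (wght ν s t)^2 * F3 k v (θ t)
    + γ₀ * wght ν s t * (k:ℝ)^2 * F4 v (θ t))

/-- The augmented functional with time-dependent parameters
`Ψ(t) = ½[E0 + α₀(t) E1 + 2β₀(t) E3 + γ₀(t) k² E4]` with
`β₀(t) = β(t)/|k|`, `α₀(t) = ν^{1/2}β₀(t)^{1/2}`, `γ₀(t) = 16β₀(t)^{3/2}/ν^{1/2}`. -/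
noncomputable def Psi (ν : ℝ) (k : ℤ) (β : ℝ → ℝ) (v : ℝ → ℝ) (θ : ℝ → ℝ → ℂ) (t : ℝ) : ℝ :=
  let β₀ : ℝ := β t / |(k:ℝ)|
  let α₀ : ℝ := ν ^ ((1:ℝ)/2) * β₀ ^ ((1:ℝ)/2)
  let γ₀ : ℝ := 16 * β₀ ^ ((3:ℝ)/2) / ν ^ ((1:ℝ)/2)
  (1/2) * (F0 (θ t) + α₀ * F1 (θ t) + 2 * β₀ * F3 k v (θ t)
    + γ₀ * (k:ℝ)^2 * F4 v (θ t))

/-- `Ξ(t) = ∫₀ᵗ ξ(τ) dτ`. -/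
noncomputable def XiInt (ξ : ℝ → ℝ) (t : ℝ) : ℝ := ∫ τ in (0:ℝ)..t, ξ τ

/-- Squared `H¹(𝕋)` norm. -/
noncomputable def H1sq (f : ℝ → ℂ) : ℝ := L2sq f + L2sq (fun y => deriv f y)

private lemma hasDerivAt_re {g : ℝ → ℂ} {g' : ℂ} {x : ℝ} (h : HasDerivAt g g' x) :
    HasDerivAt (fun y => (g y).re) g'.re x := by
  have := Complex.reCLM.hasFDerivAt.comp_hasDerivAt x h
  simp only [Function.comp_def, Complex.reCLM_apply] at this
  exact this

private lemma hasDerivAt_conj {g : ℝ → ℂ} {g' : ℂ} {x : ℝ} (h : HasDerivAt g g' x) :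
    HasDerivAt (fun y => (starRingEnd ℂ) (g y)) ((starRingEnd ℂ) g') x := h.star

private lemma periodic_deriv' {E : Type*} [NormedAddCommGroup E] [NormedSpace ℝ E]
    {g : ℝ → E} {c : ℝ} (h : Function.Periodic g c) : Function.Periodic (deriv g) c := by
  intro x
  have h2 : deriv (fun y => g (y + c)) x = deriv g (x + c) := deriv_comp_add_const g c x
  rw [← h2, show (fun y => g (y + c)) = g from funext h]

private lemma alg_key (nu xi : ℝ) (k : ℤ) (q p r : ℝ) (a b d e : ℂ) :
    (Complex.I * (k:ℂ) * (q:ℂ) * ((nu:ℂ) * d - (xi:ℂ) * (p:ℂ) * Complex.I * (k:ℂ) * a)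
        * (starRingEnd ℂ) b
      + Complex.I * (k:ℂ) * (q:ℂ) * a
        * (starRingEnd ℂ) ((nu:ℂ) * e
          - ((xi:ℂ) * (q:ℂ) * Complex.I * (k:ℂ) * a + (xi:ℂ) * (p:ℂ) * Complex.I * (k:ℂ) * b))).re
    = (-xi * (k:ℝ)^2 * ‖(q:ℂ) * a‖^2
        - 2 * nu * (Complex.I * (k:ℂ) * (q:ℂ) * b * (starRingEnd ℂ) d).re
        - nu * (Complex.I * (k:ℂ) * (r:ℂ) * a * (starRingEnd ℂ) d).re)
      + nu * ((Complex.I * (k:ℂ) * (r:ℂ) * a * (starRingEnd ℂ) d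
          + Complex.I * (k:ℂ) * (q:ℂ) * b * (starRingEnd ℂ) d)
          + Complex.I * (k:ℂ) * (q:ℂ) * a * (starRingEnd ℂ) e).re := by
  simp only [Complex.mul_re, Complex.mul_im, Complex.add_re, Complex.add_im, Complex.sub_re,
    Complex.sub_im, Complex.conj_re, Complex.conj_im, Complex.I_re, Complex.I_im,
    Complex.ofReal_re, Complex.ofReal_im, Complex.intCast_re, Complex.intCast_im,
    Complex.sq_norm, Complex.normSq_apply]
  ring

/-- Energy balance (3):
`d/dt E3 = −ξ(t)k²E4 − 2ν Re⟨ik v' ∂_yθ, ∂_y²θ⟩ − ν Re⟨ik v'' θ, ∂_y²θ⟩`. -/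
theorem energy_balance_E3
    (ν : ℝ) (hν : 0 < ν) (k : ℤ) (hk : k ≠ 0) (ξ : ℝ → ℝ)
    (v : ℝ → ℝ) (hv : ContDiff ℝ (⊤ : ℕ∞) v) (hvper : Function.Periodic v (2*π))
    (θ : ℝ → ℝ → ℂ)
    (hθreg : ContDiff ℝ (⊤ : ℕ∞) (fun p : ℝ × ℝ => θ p.1 p.2))
    (hθper : ∀ t, Function.Periodic (θ t) (2*π))
    (hpde : ∀ t, 0 < t → ∀ y : ℝ,
      HasDerivAt (fun τ => θ τ y)
        ((ν:ℂ) * deriv (deriv (θ t)) y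
          - (ξ t : ℂ) * (v y : ℂ) * Complex.I * (k:ℂ) * θ t y) t) :
    ∀ t, 0 < t →
      HasDerivAt (fun τ => F3 k v (θ τ))
        (-ξ t * (k:ℝ)^2 * F4 v (θ t)
          - 2 * ν * reInner
              (fun y => Complex.I * (k:ℂ) * Complex.ofReal (deriv v y) * deriv (θ t) y)
              (fun y => deriv (deriv (θ t)) y)
          - ν * reInner
              (fun y => Complex.I * (k:ℂ) * Complex.ofReal (deriv (deriv v) y) * θ t y)
              (fun y => deriv (deriv (θ t)) y)) t := by
  intro t ht
  set f : ℝ × ℝ → ℂ := fun p => θ p.1 p.2 with hf_def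
  have hfd : Differentiable ℝ f := hθreg.differentiable (by simp)
  have hf' : ∀ p, HasFDerivAt f (fderiv ℝ f p) p := fun p => (hfd p).hasFDerivAt
  have hf1C : ContDiff ℝ (⊤ : ℕ∞) (fderiv ℝ f) := hθreg.fderiv_right (by simp)
  have hf1d : Differentiable ℝ (fderiv ℝ f) := hf1C.differentiable (by simp)
  have hf'' : ∀ p, HasFDerivAt (fderiv ℝ f) (fderiv ℝ (fderiv ℝ f) p) p :=
    fun p => (hf1d p).hasFDerivAt
  have hf2C : ContDiff ℝ (⊤ : ℕ∞) (fderiv ℝ (fderiv ℝ f)) := hf1C.fderiv_right (by simp)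
  have hsymm : ∀ p : ℝ × ℝ, ∀ w1 w2 : ℝ × ℝ,
      fderiv ℝ (fderiv ℝ f) p w1 w2 = fderiv ℝ (fderiv ℝ f) p w2 w1 :=
    fun p => second_derivative_symmetric hf' (hf'' p)
  -- directional derivative facts
  have hY : ∀ σ y : ℝ, HasDerivAt (θ σ) (fderiv ℝ f (σ, y) ((0:ℝ), (1:ℝ))) y := fun σ y =>
    (hf' (σ, y)).comp_hasDerivAt y (HasDerivAt.prodMk (hasDerivAt_const y σ) (hasDerivAt_id y))
  have hT : ∀ σ y : ℝ, HasDerivAt (fun σ' => θ σ' y) (fderiv ℝ f (σ, y) ((1:ℝ), (0:ℝ))) σ :=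
    fun σ y => by
      have h2 := HasDerivAt.prodMk (hasDerivAt_id' σ) (hasDerivAt_const σ y)
      exact (hf' (σ, y)).comp_hasDerivAt σ h2
  have hderivY : ∀ σ y : ℝ, deriv (θ σ) y = fderiv ℝ f (σ, y) ((0:ℝ), (1:ℝ)) :=
    fun σ y => (hY σ y).deriv
  have hTY : ∀ σ y : ℝ, HasDerivAt (fun σ' => deriv (θ σ') y)
      (fderiv ℝ (fderiv ℝ f) (σ, y) ((1:ℝ), (0:ℝ)) ((0:ℝ), (1:ℝ))) σ := by
    intro σ y
    have h1 : HasDerivAt (fun σ' => fderiv ℝ f (σ', y))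
        (fderiv ℝ (fderiv ℝ f) (σ, y) ((1:ℝ), (0:ℝ))) σ :=
      (hf'' (σ, y)).comp_hasDerivAt σ (HasDerivAt.prodMk (hasDerivAt_id σ) (hasDerivAt_const σ y))
    have h2 := (ContinuousLinearMap.apply ℝ ℂ ((0:ℝ), (1:ℝ))).hasFDerivAt.comp_hasDerivAt σ h1
    simp only [ContinuousLinearMap.apply_apply, Function.comp_def] at h2
    have h3 : (fun σ' => fderiv ℝ f (σ', y) ((0:ℝ), (1:ℝ))) = fun σ' => deriv (θ σ') y := by
      funext σ'; exact (hderivY σ' y).symm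
    rwa [h3] at h2
  have hYT : ∀ σ y : ℝ, HasDerivAt (fun y' => fderiv ℝ f (σ, y') ((1:ℝ), (0:ℝ)))
      (fderiv ℝ (fderiv ℝ f) (σ, y) ((0:ℝ), (1:ℝ)) ((1:ℝ), (0:ℝ))) y := by
    intro σ y
    have h1 : HasDerivAt (fun y' => fderiv ℝ f (σ, y'))
        (fderiv ℝ (fderiv ℝ f) (σ, y) ((0:ℝ), (1:ℝ))) y :=
      (hf'' (σ, y)).comp_hasDerivAt y (HasDerivAt.prodMk (hasDerivAt_const y σ) (hasDerivAt_id y))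
    have h2 := (ContinuousLinearMap.apply ℝ ℂ ((1:ℝ), (0:ℝ))).hasFDerivAt.comp_hasDerivAt y h1
    simpa only [ContinuousLinearMap.apply_apply, Function.comp_def] using h2
  -- the τ-derivative of the integrand
  set G : ℝ → ℝ → ℝ := fun σ y =>
    (Complex.I * (k:ℂ) * ((deriv v y : ℝ):ℂ) * fderiv ℝ f (σ, y) ((1:ℝ), (0:ℝ))
        * (starRingEnd ℂ) (fderiv ℝ f (σ, y) ((0:ℝ), (1:ℝ)))
      + Complex.I * (k:ℂ) * ((deriv v y : ℝ):ℂ) * f (σ, y)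
        * (starRingEnd ℂ) (fderiv ℝ (fderiv ℝ f) (σ, y) ((1:ℝ), (0:ℝ)) ((0:ℝ), (1:ℝ)))).re
    with hG_def
  have hH : ∀ σ y : ℝ, HasDerivAt
      (fun σ' => (Complex.I * (k:ℂ) * ((deriv v y : ℝ):ℂ) * θ σ' y
        * (starRingEnd ℂ) (deriv (θ σ') y)).re) (G σ y) σ := by
    intro σ y
    have h1 := ((hT σ y).const_mul (Complex.I * (k:ℂ) * ((deriv v y : ℝ):ℂ))).mul
      (hasDerivAt_conj (hTY σ y))
    rw [hderivY σ y] at h1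
    have h2 := hasDerivAt_re h1
    exact h2
  -- continuity facts
  have hvC : Continuous (deriv v) :=
    ((contDiff_infty_iff_deriv.mp (hv.of_le (by simp))).2).continuous
  have happly : ∀ w : ℝ × ℝ, Continuous fun p : ℝ × ℝ => fderiv ℝ f p w := fun w =>
    (ContinuousLinearMap.apply ℝ ℂ w).continuous.comp hf1C.continuous
  have happly2 : Continuous fun p : ℝ × ℝ =>
      fderiv ℝ (fderiv ℝ f) p ((1:ℝ), (0:ℝ)) ((0:ℝ), (1:ℝ)) :=
    (ContinuousLinearMap.apply ℝ ℂ ((0:ℝ), (1:ℝ))).continuous.comp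
      ((ContinuousLinearMap.apply ℝ ((ℝ × ℝ) →L[ℝ] ℂ) ((1:ℝ), (0:ℝ))).continuous.comp
        hf2C.continuous)
  have hGcont : Continuous fun p : ℝ × ℝ => G p.1 p.2 := by
    have hc : Continuous fun p : ℝ × ℝ => Complex.I * (k:ℂ) * ((deriv v p.2 : ℝ):ℂ) := by
      exact continuous_const.mul (Complex.continuous_ofReal.comp (hvC.comp continuous_snd))
    exact Complex.continuous_re.comp
      (((hc.mul (happly ((1:ℝ), (0:ℝ)))).mul ((happly ((0:ℝ), (1:ℝ))).star)).add
        ((hc.mul hθreg.continuous).mul happly2.star))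
  have hint_cont : ∀ σ : ℝ, Continuous fun y =>
      (Complex.I * (k:ℂ) * ((deriv v y : ℝ):ℂ) * θ σ y
        * (starRingEnd ℂ) (deriv (θ σ) y)).re := by
    intro σ
    have h1 : Continuous (θ σ) := hθreg.continuous.comp (Continuous.prodMk_right σ)
    have h2 : Continuous fun y => deriv (θ σ) y := by
      have h3 : (fun y => deriv (θ σ) y) = fun y => fderiv ℝ f (σ, y) ((0:ℝ), (1:ℝ)) :=
        funext fun y => hderivY σ y
      rw [h3]
      exact (happly ((0:ℝ), (1:ℝ))).comp (Continuous.prodMk_right σ)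
    exact Complex.continuous_re.comp
      (((continuous_const.mul (Complex.continuous_ofReal.comp hvC)).mul h1).mul h2.star)
  -- bound on a compact neighborhood
  obtain ⟨M, hM⟩ := (isCompact_Icc.prod isCompact_uIcc :
      IsCompact (Set.Icc (t-1) (t+1) ×ˢ Set.uIcc (0:ℝ) (2*π))).exists_bound_of_continuousOn
    hGcont.continuousOn
  -- differentiate under the integral sign
  have key := intervalIntegral.hasDerivAt_integral_of_dominated_loc_of_deriv_le
    (F := fun σ y => (Complex.I * (k:ℂ) * ((deriv v y : ℝ):ℂ) * θ σ y
      * (starRingEnd ℂ) (deriv (θ σ) y)).re)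
    (F' := G) (x₀ := t) (a := (0:ℝ)) (b := 2*π) (bound := fun _ => M)
    (μ := MeasureTheory.volume) (Metric.ball_mem_nhds t one_pos)
    (Filter.Eventually.of_forall fun σ => (hint_cont σ).aestronglyMeasurable)
    ((hint_cont t).intervalIntegrable _ _)
    ((hGcont.comp (Continuous.prodMk_right t)).aestronglyMeasurable)
    (Filter.Eventually.of_forall fun y hy x hx => by
      have hx' : x ∈ Set.Icc (t-1) (t+1) := by
        rw [Real.ball_eq_Ioo] at hx
        exact Set.Ioo_subset_Icc_self hx
      exact hM (x, y) (Set.mk_mem_prod hx' (Set.uIoc_subset_uIcc hy)))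
    intervalIntegrable_const
    (Filter.Eventually.of_forall fun y hy x hx => hH x y)
  have hmain : HasDerivAt (fun τ => F3 k v (θ τ)) (∫ y in (0:ℝ)..(2*π), G t y) t := key.2
  -- now identify the derivative
  have hΘC : ContDiff ℝ (⊤ : ℕ∞) (θ t) :=
    hθreg.comp (ContDiff.prodMk (contDiff_const : ContDiff ℝ (⊤ : ℕ∞) fun _ : ℝ => t) contDiff_id)
  have hq := contDiff_infty_iff_deriv.mp (hΘC.of_le (by simp))
  have hq2 := contDiff_infty_iff_deriv.mp hq.2
  have hq3 := contDiff_infty_iff_deriv.mp hq2.2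
  have hvq := contDiff_infty_iff_deriv.mp (hv.of_le (by simp))
  have hvq2 := contDiff_infty_iff_deriv.mp hvq.2
  have hA : ∀ y, fderiv ℝ f (t, y) ((1:ℝ), (0:ℝ))
      = (ν:ℂ) * deriv (deriv (θ t)) y
        - (ξ t : ℂ) * (v y : ℂ) * Complex.I * (k:ℂ) * θ t y :=
    fun y => (hT t y).unique (hpde t ht y)
  have hB : ∀ y, fderiv ℝ (fderiv ℝ f) (t, y) ((1:ℝ), (0:ℝ)) ((0:ℝ), (1:ℝ))
      = (ν:ℂ) * deriv (deriv (deriv (θ t))) y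
        - ((ξ t:ℂ) * ((deriv v y : ℝ):ℂ) * Complex.I * (k:ℂ) * θ t y
           + (ξ t:ℂ) * (v y:ℂ) * Complex.I * (k:ℂ) * deriv (θ t) y) := by
    intro y
    have h1 := hYT t y
    rw [show (fun y' => fderiv ℝ f (t, y') ((1:ℝ), (0:ℝ))) = fun y' =>
        (ν:ℂ) * deriv (deriv (θ t)) y' - (ξ t:ℂ) * (v y':ℂ) * Complex.I * (k:ℂ) * θ t y'
        from funext hA] at h1
    have hd1 : HasDerivAt (fun y' => (ν:ℂ) * deriv (deriv (θ t)) y')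
        ((ν:ℂ) * deriv (deriv (deriv (θ t))) y) y := ((hq3.1 y).hasDerivAt).const_mul (ν:ℂ)
    have hvy : HasDerivAt (fun y' => ((v y' : ℝ) : ℂ)) (((deriv v y : ℝ):ℂ)) y :=
      ((hv.differentiable (by simp) y).hasDerivAt).ofReal_comp
    have hΘat : HasDerivAt (θ t) (deriv (θ t) y) y := (hq.1 y).hasDerivAt
    have hsub : HasDerivAt (fun y' => (ξ t:ℂ) * (v y':ℂ) * Complex.I * (k:ℂ) * θ t y')
        ((ξ t:ℂ) * ((deriv v y : ℝ):ℂ) * Complex.I * (k:ℂ) * θ t y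
          + (ξ t:ℂ) * (v y:ℂ) * Complex.I * (k:ℂ) * deriv (θ t) y) y :=
      (((hvy.const_mul ((ξ t:ℂ))).mul_const Complex.I).mul_const ((k:ℂ))).mul hΘat
    calc fderiv ℝ (fderiv ℝ f) (t, y) ((1:ℝ), (0:ℝ)) ((0:ℝ), (1:ℝ))
        = fderiv ℝ (fderiv ℝ f) (t, y) ((0:ℝ), (1:ℝ)) ((1:ℝ), (0:ℝ)) := hsymm (t, y) _ _
      _ = _ := h1.unique (hd1.sub hsub)
  -- pointwise identity for G t
  have hGt : ∀ y, G t y =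
      (-(ξ t) * (k:ℝ)^2 * ‖((deriv v y : ℝ):ℂ) * θ t y‖^2
        - 2 * ν * (Complex.I * (k:ℂ) * ((deriv v y : ℝ):ℂ) * deriv (θ t) y
            * (starRingEnd ℂ) (deriv (deriv (θ t)) y)).re
        - ν * (Complex.I * (k:ℂ) * ((deriv (deriv v) y : ℝ):ℂ) * θ t y
            * (starRingEnd ℂ) (deriv (deriv (θ t)) y)).re)
      + ν * ((Complex.I * (k:ℂ) * ((deriv (deriv v) y : ℝ):ℂ) * θ t y
            * (starRingEnd ℂ) (deriv (deriv (θ t)) y)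
          + Complex.I * (k:ℂ) * ((deriv v y : ℝ):ℂ) * deriv (θ t) y
            * (starRingEnd ℂ) (deriv (deriv (θ t)) y))
          + Complex.I * (k:ℂ) * ((deriv v y : ℝ):ℂ) * θ t y
            * (starRingEnd ℂ) (deriv (deriv (deriv (θ t))) y)).re := by
    intro y
    have hfty : f (t, y) = θ t y := rfl
    rw [hG_def]
    simp only []
    rw [hA y, hB y, ← hderivY t y, hfty]
    exact alg_key ν (ξ t) k (deriv v y) (v y) (deriv (deriv v) y) (θ t y) (deriv (θ t) y)
      (deriv (deriv (θ t)) y) (deriv (deriv (deriv (θ t))) y)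
  -- integrate the exact-derivative part
  have hUder : ∀ y : ℝ, HasDerivAt
      (fun y' => (Complex.I * (k:ℂ) * ((deriv v y' : ℝ):ℂ) * θ t y'
        * (starRingEnd ℂ) (deriv (deriv (θ t)) y')).re)
      (((Complex.I * (k:ℂ) * ((deriv (deriv v) y : ℝ):ℂ) * θ t y
            * (starRingEnd ℂ) (deriv (deriv (θ t)) y)
          + Complex.I * (k:ℂ) * ((deriv v y : ℝ):ℂ) * deriv (θ t) y
            * (starRingEnd ℂ) (deriv (deriv (θ t)) y))
          + Complex.I * (k:ℂ) * ((deriv v y : ℝ):ℂ) * θ t y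
            * (starRingEnd ℂ) (deriv (deriv (deriv (θ t))) y)).re) y := by
    intro y
    have hdv : HasDerivAt (fun y' => ((deriv v y' : ℝ):ℂ)) (((deriv (deriv v) y : ℝ):ℂ)) y :=
      ((hvq2.1 y).hasDerivAt).ofReal_comp
    have h1 := (((hdv.const_mul (Complex.I * (k:ℂ))).mul ((hq.1 y).hasDerivAt)).mul
      (hasDerivAt_conj ((hq3.1 y).hasDerivAt)))
    have h2 := hasDerivAt_re h1
    convert h2 using 1
    congr 1
    simp only [Pi.mul_apply]
    ring
  -- continuity of the pieces
  have hΘcont : Continuous (θ t) := hΘC.continuous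
  have hbcont : Continuous (deriv (θ t)) := hq.2.continuous
  have hdcont : Continuous (deriv (deriv (θ t))) := hq2.2.continuous
  have hecont : Continuous (deriv (deriv (deriv (θ t)))) := hq3.2.continuous
  have hv2C : Continuous (deriv (deriv v)) := hvq2.2.continuous
  have hn1cont : Continuous fun y => ‖((deriv v y : ℝ):ℂ) * θ t y‖^2 :=
    (((Complex.continuous_ofReal.comp hvC).mul hΘcont).norm).pow 2
  have hn2cont : Continuous fun y => (Complex.I * (k:ℂ) * ((deriv v y : ℝ):ℂ) * deriv (θ t) y
      * (starRingEnd ℂ) (deriv (deriv (θ t)) y)).re :=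
    Complex.continuous_re.comp (((continuous_const.mul
      (Complex.continuous_ofReal.comp hvC)).mul hbcont).mul hdcont.star)
  have hn3cont : Continuous fun y => (Complex.I * (k:ℂ) * ((deriv (deriv v) y : ℝ):ℂ) * θ t y
      * (starRingEnd ℂ) (deriv (deriv (θ t)) y)).re :=
    Complex.continuous_re.comp (((continuous_const.mul
      (Complex.continuous_ofReal.comp hv2C)).mul hΘcont).mul hdcont.star)
  have hUcont : Continuous fun y =>
      ((Complex.I * (k:ℂ) * ((deriv (deriv v) y : ℝ):ℂ) * θ t y
            * (starRingEnd ℂ) (deriv (deriv (θ t)) y)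
          + Complex.I * (k:ℂ) * ((deriv v y : ℝ):ℂ) * deriv (θ t) y
            * (starRingEnd ℂ) (deriv (deriv (θ t)) y))
          + Complex.I * (k:ℂ) * ((deriv v y : ℝ):ℂ) * θ t y
            * (starRingEnd ℂ) (deriv (deriv (deriv (θ t))) y)).re :=
    Complex.continuous_re.comp
      (((((continuous_const.mul (Complex.continuous_ofReal.comp hv2C)).mul hΘcont).mul
          hdcont.star).add
        (((continuous_const.mul (Complex.continuous_ofReal.comp hvC)).mul hbcont).mul
          hdcont.star)).add
        (((continuous_const.mul (Complex.continuous_ofReal.comp hvC)).mul hΘcont).mul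
          hecont.star))
  -- the exact-derivative integral vanishes by periodicity
  have hUint : (∫ y in (0:ℝ)..(2*π),
      ((Complex.I * (k:ℂ) * ((deriv (deriv v) y : ℝ):ℂ) * θ t y
            * (starRingEnd ℂ) (deriv (deriv (θ t)) y)
          + Complex.I * (k:ℂ) * ((deriv v y : ℝ):ℂ) * deriv (θ t) y
            * (starRingEnd ℂ) (deriv (deriv (θ t)) y))
          + Complex.I * (k:ℂ) * ((deriv v y : ℝ):ℂ) * θ t y
            * (starRingEnd ℂ) (deriv (deriv (deriv (θ t))) y)).re) = 0 := by
    have heq := intervalIntegral.integral_eq_sub_of_hasDerivAt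
      (f := fun y' => (Complex.I * (k:ℂ) * ((deriv v y' : ℝ):ℂ) * θ t y'
        * (starRingEnd ℂ) (deriv (deriv (θ t)) y')).re)
      (a := (0:ℝ)) (b := 2*π) (fun y _ => hUder y) (hUcont.intervalIntegrable _ _)
    rw [heq]
    have hper_dv : deriv v (2*π) = deriv v 0 := by
      simpa using (periodic_deriv' hvper) 0
    have hper_Θ : θ t (2*π) = θ t 0 := by simpa using (hθper t) 0
    have hper_d : deriv (deriv (θ t)) (2*π) = deriv (deriv (θ t)) 0 := by
      simpa using (periodic_deriv' (periodic_deriv' (hθper t))) 0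
    simp only [hper_dv, hper_Θ, hper_d, sub_self]
  -- assemble
  have hfinal : (∫ y in (0:ℝ)..(2*π), G t y)
      = -ξ t * (k:ℝ)^2 * F4 v (θ t)
        - 2 * ν * reInner
            (fun y => Complex.I * (k:ℂ) * Complex.ofReal (deriv v y) * deriv (θ t) y)
            (fun y => deriv (deriv (θ t)) y)
        - ν * reInner
            (fun y => Complex.I * (k:ℂ) * Complex.ofReal (deriv (deriv v) y) * θ t y)
            (fun y => deriv (deriv (θ t)) y) := by
    simp only [hGt]
    have hi1 : IntervalIntegrable
        (fun y => -ξ t * (k:ℝ)^2 * ‖Complex.ofReal (deriv v y) * θ t y‖^2)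
        MeasureTheory.volume 0 (2*π) :=
      (continuous_const.mul hn1cont).intervalIntegrable _ _
    have hi2 : IntervalIntegrable
        (fun y => 2 * ν * (Complex.I * (k:ℂ) * ((deriv v y : ℝ):ℂ) * deriv (θ t) y
          * (starRingEnd ℂ) (deriv (deriv (θ t)) y)).re) MeasureTheory.volume 0 (2*π) :=
      (continuous_const.mul hn2cont).intervalIntegrable _ _
    have hi3 : IntervalIntegrable
        (fun y => ν * (Complex.I * (k:ℂ) * ((deriv (deriv v) y : ℝ):ℂ) * θ t y
          * (starRingEnd ℂ) (deriv (deriv (θ t)) y)).re) MeasureTheory.volume 0 (2*π) :=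
      (continuous_const.mul hn3cont).intervalIntegrable _ _
    have hiU : IntervalIntegrable (fun y => ν *
        ((Complex.I * (k:ℂ) * ((deriv (deriv v) y : ℝ):ℂ) * θ t y
            * (starRingEnd ℂ) (deriv (deriv (θ t)) y)
          + Complex.I * (k:ℂ) * ((deriv v y : ℝ):ℂ) * deriv (θ t) y
            * (starRingEnd ℂ) (deriv (deriv (θ t)) y))
          + Complex.I * (k:ℂ) * ((deriv v y : ℝ):ℂ) * θ t y
            * (starRingEnd ℂ) (deriv (deriv (deriv (θ t))) y)).re)
        MeasureTheory.volume 0 (2*π) :=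
      (continuous_const.mul hUcont).intervalIntegrable _ _
    rw [intervalIntegral.integral_add ((hi1.sub hi2).sub hi3) hiU,
      intervalIntegral.integral_const_mul, hUint, mul_zero, add_zero,
      intervalIntegral.integral_sub (hi1.sub hi2) hi3,
      intervalIntegral.integral_sub hi1 hi2,
      intervalIntegral.integral_const_mul, intervalIntegral.integral_const_mul,
      intervalIntegral.integral_const_mul]
    rfl
  rw [hfinal] at hmain
  exact hmain
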